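/- A paving k-matroid (V,H) is equatable if and only if it is exchangeable. -/

import Mathlib

open Finset

variable {V : Type*}

/-- A `k`-hypergraph `H` is separable if some vertex labeling `x : V → ℝ` has
`H` equal to the set of `k`-subsets with nonnegative label sum. -/
def SeparableHypergraph [Fintype V] [DecidableEq V] (k : ℕ) (H : Finset (Finset V)) : Prop :=
  ∃ x : V → ℝ, ∀ E : Finset V, E ∈ H ↔ E.card = k ∧ 0 ≤ ∑ v ∈ E, x v

/-- A `k`-hypergraph `H` is equatable if some nonzero nonnegative labeling `y` of the
`k`-subsets of `V` has, for every vertex `v`, the sum of labels of edges containing `v`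
equal to the sum of labels of non-edges containing `v`. -/
def EquatableHypergraph [Fintype V] [DecidableEq V] (k : ℕ) (H : Finset (Finset V)) : Prop :=
  ∃ y : Finset V → ℝ,
    (∀ G, 0 ≤ y G) ∧
    (∃ G ∈ (univ : Finset V).powersetCard k, y G ≠ 0) ∧
    ∀ v : V,
      ∑ E ∈ ((univ : Finset V).powersetCard k).filter (fun E => v ∈ E ∧ E ∈ H), y E =
      ∑ F ∈ ((univ : Finset V).powersetCard k).filter (fun F => v ∈ F ∧ F ∉ H), y F

/-- A hypergraph is exchangeable if there are edges `E₁, E₂` and `v₁ ∈ E₁ \ E₂`,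
`v₂ ∈ E₂ \ E₁` such that both sets obtained by exchanging `v₁` and `v₂` are non-edges. -/
def ExchangeableHypergraph [DecidableEq V] (H : Finset (Finset V)) : Prop :=
  ∃ E₁ ∈ H, ∃ E₂ ∈ H, ∃ v₁ ∈ E₁ \ E₂, ∃ v₂ ∈ E₂ \ E₁,
    insert v₂ (E₁.erase v₁) ∉ H ∧ insert v₁ (E₂.erase v₂) ∉ H

/-!
In a paving `k`-matroid every `(k-1)`-set `I` spans a hyperplane, namely `I` together with all
`u` for which `I ∪ {u}` is not a basis, and basis exchange shows that no basis lies inside it.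
Hence two distinct hyperplanes spanned by non-bases yield an exchangeable pair of bases, and if
there is none, the non-bases are exactly the `k`-subsets of a single set `P`. The weights `-1` on
`P` and `k` off `P` then give every basis a positive and every non-basis a negative weight, which
no balancing labeling `y` survives. Conversely, for an exchange `E₁, E₂ ↦ F₁, F₂` the multisets
`E₁ + E₂` and `F₁ + F₂` agree, so the indicator of these four sets balances every vertex.
-/

section Hyperplane

variable [Fintype V] [DecidableEq V] {k : ℕ} {H : Finset (Finset V)}

/-- For a `(k-1)`-set `I` of a paving `k`-matroid with bases `H`, the hyperplane spanned by `I`. -/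
def hyperplane (H : Finset (Finset V)) (I : Finset V) : Finset V :=
  univ.filter fun u => u ∈ I ∨ insert u I ∉ H

theorem mem_hyperplane {I : Finset V} {u : V} :
    u ∈ hyperplane H I ↔ u ∈ I ∨ insert u I ∉ H := by
  simp [hyperplane]

theorem subset_hyperplane (I : Finset V) : I ⊆ hyperplane H I :=
  fun _ hu => mem_hyperplane.mpr (Or.inl hu)

theorem subset_hyperplane_erase {F : Finset V} {w : V} (hF : F ∉ H) (hw : w ∈ F) :
    F ⊆ hyperplane H (F.erase w) := by
  intro u hu
  by_cases huw : u = w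
  · subst huw
    exact mem_hyperplane.mpr (Or.inr (by rwa [insert_erase hw]))
  · exact subset_hyperplane _ (mem_erase.mpr ⟨huw, hu⟩)

theorem exists_notMem_hyperplane (hk : 1 ≤ k) (hH : ∀ E ∈ H, E.card = k)
    (hpaving : ∀ I : Finset V, I.card = k - 1 → ∃ E ∈ H, I ⊆ E)
    {I : Finset V} (hI : I.card = k - 1) : ∃ z, z ∉ hyperplane H I := by
  obtain ⟨E, hE, hIE⟩ := hpaving I hI
  obtain ⟨z, hzI, rfl⟩ := exists_eq_insert_iff.mpr ⟨hIE, by rw [hI, hH E hE]; omega⟩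
  exact ⟨z, by simp [mem_hyperplane, hzI, hE]⟩

theorem exchangeable_of_mem_hyperplane_sdiff {I₁ I₂ : Finset V} {v₁ v₂ : V}
    (hv₁ : v₁ ∉ hyperplane H I₁) (hv₂ : v₂ ∉ hyperplane H I₂)
    (hv₁I₂ : v₁ ∈ hyperplane H I₂ \ I₂) (hv₂I₁ : v₂ ∈ hyperplane H I₁ \ I₁) :
    ExchangeableHypergraph H := by
  simp only [mem_hyperplane, mem_sdiff, not_or, not_not] at hv₁ hv₂ hv₁I₂ hv₂I₁
  have hF₁ : insert v₂ I₁ ∉ H := hv₂I₁.1.resolve_left hv₂I₁.2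
  have hF₂ : insert v₁ I₂ ∉ H := hv₁I₂.1.resolve_left hv₁I₂.2
  have hne : v₁ ≠ v₂ := fun h => hF₁ (h ▸ hv₁.2)
  refine ⟨_, hv₁.2, _, hv₂.2, v₁, ?_, v₂, ?_, ?_, ?_⟩
  · simp [hne, hv₁I₂.2]
  · simp [hne.symm, hv₂I₁.2]
  · rwa [erase_insert hv₁.1]
  · rwa [erase_insert hv₂.1]

variable (hbex : ∀ E₁ ∈ H, ∀ E₂ ∈ H, ∀ v₁ ∈ E₁ \ E₂,
  ∃ v₂ ∈ E₂ \ E₁, insert v₂ (E₁.erase v₁) ∈ H)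
include hbex

/-- Exchanging `z` out of the basis `insert z I` would produce a basis `insert t I` with
`t ∈ hyperplane H I \ I`. -/
theorem notMem_of_subset_hyperplane {I B : Finset V} {z : V} (hz : z ∉ hyperplane H I)
    (hB : B ⊆ hyperplane H I) : B ∉ H := by
  intro hBH
  simp only [mem_hyperplane, not_or, not_not] at hz
  obtain ⟨t, ht, htH⟩ := hbex _ hz.2 B hBH z
    (mem_sdiff.mpr ⟨mem_insert_self z I, fun hzB => (mem_hyperplane.not.mpr (by tauto)) (hB hzB)⟩)
  rw [erase_insert hz.1] at htH
  obtain ⟨htB, htI⟩ := mem_sdiff.mp ht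
  rcases mem_hyperplane.mp (hB htB) with h | h
  · exact htI (mem_insert_of_mem h)
  · exact h htH

theorem hyperplane_subset_hyperplane {I J : Finset V} {z : V} (hz : z ∉ hyperplane H I)
    (hJ : J ⊆ hyperplane H I) : hyperplane H I ⊆ hyperplane H J := by
  intro u hu
  rw [mem_hyperplane, or_iff_not_imp_left]
  exact fun _ => notMem_of_subset_hyperplane hbex hz (insert_subset hu hJ)

theorem hyperplane_eq_of_subset {I J : Finset V} {z z' : V} (hz : z ∉ hyperplane H I)
    (hz' : z' ∉ hyperplane H J) (hJ : J ⊆ hyperplane H I) :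
    hyperplane H J = hyperplane H I :=
  Subset.antisymm
    (hyperplane_subset_hyperplane hbex hz'
      ((subset_hyperplane I).trans (hyperplane_subset_hyperplane hbex hz hJ)))
    (hyperplane_subset_hyperplane hbex hz hJ)

variable (hproper : ∀ I : Finset V, I.card = k - 1 → ∃ z, z ∉ hyperplane H I)
include hproper

theorem exists_card_eq_notMem_hyperplane_eq {I : Finset V} (hI : I.card = k - 1)
    (hIk : k ≤ (hyperplane H I).card) (v : V) :
    ∃ J : Finset V, J.card = k - 1 ∧ v ∉ J ∧ hyperplane H J = hyperplane H I := by
  obtain ⟨J, hJsub, hJ⟩ := exists_subset_card_eq (s := (hyperplane H I).erase v) (n := k - 1)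
    ((Nat.sub_le_sub_right hIk 1).trans pred_card_le_card_erase)
  obtain ⟨z, hz⟩ := hproper I hI
  obtain ⟨z', hz'⟩ := hproper J hJ
  exact ⟨J, hJ, fun hv => notMem_erase v _ (hJsub hv),
    hyperplane_eq_of_subset hbex hz hz' (hJsub.trans (erase_subset _ _))⟩

theorem exchangeable_of_hyperplane_ne {I J : Finset V} (hI : I.card = k - 1)
    (hJ : J.card = k - 1) (hIk : k ≤ (hyperplane H I).card) (hJk : k ≤ (hyperplane H J).card)
    (hne : hyperplane H I ≠ hyperplane H J) : ExchangeableHypergraph H := by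
  obtain ⟨z, hz⟩ := hproper I hI
  obtain ⟨z', hz'⟩ := hproper J hJ
  obtain ⟨v₂, hv₂I, hv₂J⟩ := not_subset.mp fun h =>
    hne (hyperplane_eq_of_subset hbex hz' hz ((subset_hyperplane I).trans h))
  obtain ⟨v₁, hv₁J, hv₁I⟩ := not_subset.mp fun h =>
    hne (hyperplane_eq_of_subset hbex hz hz' ((subset_hyperplane J).trans h)).symm
  obtain ⟨I₁, -, hv₂I₁, hI₁⟩ := exists_card_eq_notMem_hyperplane_eq hbex hproper hI hIk v₂
  obtain ⟨I₂, -, hv₁I₂, hI₂⟩ := exists_card_eq_notMem_hyperplane_eq hbex hproper hJ hJk v₁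
  rw [← hI₁] at hv₂I hv₁I
  rw [← hI₂] at hv₁J hv₂J
  exact exchangeable_of_mem_hyperplane_sdiff hv₁I hv₂J (mem_sdiff.mpr ⟨hv₁J, hv₁I₂⟩)
    (mem_sdiff.mpr ⟨hv₂I, hv₂I₁⟩)

theorem exists_nonedge_iff_subset_of_not_exchangeable (hk : 1 ≤ k)
    (hnx : ¬ ExchangeableHypergraph H) :
    ∃ P : Finset V, ∀ F : Finset V, F.card = k → (F ∉ H ↔ F ⊆ P) := by
  by_cases hC : ∃ C : Finset V, C.card = k ∧ C ∉ H
  swap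
  · push Not at hC
    refine ⟨∅, fun F hFk => ⟨fun hF => absurd (hC F hFk) hF, fun hF => ?_⟩⟩
    rw [subset_empty.mp hF, card_empty] at hFk
    omega
  obtain ⟨C, hCk, hC⟩ := hC
  have hcard : ∀ {F : Finset V} {w : V}, F.card = k → w ∈ F → (F.erase w).card = k - 1 :=
    fun hF hw => hF ▸ card_erase_of_mem hw
  obtain ⟨c, hc⟩ := card_pos.mp (hCk ▸ hk : 0 < C.card)
  obtain ⟨z, hz⟩ := hproper _ (hcard hCk hc)
  refine ⟨hyperplane H (C.erase c),
    fun F hFk => ⟨fun hF => ?_, notMem_of_subset_hyperplane hbex hz⟩⟩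
  by_contra hFC
  obtain ⟨w, hw⟩ := card_pos.mp (hFk ▸ hk : 0 < F.card)
  exact hnx <| exchangeable_of_hyperplane_ne hbex hproper (hcard hCk hc) (hcard hFk hw)
    (hCk ▸ card_le_card (subset_hyperplane_erase hC hc))
    (hFk ▸ card_le_card (subset_hyperplane_erase hF hw))
    (fun h => hFC (h ▸ subset_hyperplane_erase hF hw))

end Hyperplane

section Equatable

variable [DecidableEq V] {k : ℕ} {H : Finset (Finset V)}

theorem sum_mul_sum_filter_mem_comm [Fintype V] (x : V → ℝ) (y : Finset V → ℝ)
    (s : Finset (Finset V)) (p : Finset V → Prop) [DecidablePred p] :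
    ∑ v, x v * ∑ E ∈ s.filter (fun E => v ∈ E ∧ p E), y E
      = ∑ E ∈ s.filter p, (∑ v ∈ E, x v) * y E := by
  simp only [Finset.mul_sum, Finset.sum_mul]
  exact Finset.sum_comm' fun v E => by simp only [mem_univ, mem_filter]; tauto

theorem not_equatable_of_strictly_separated [Fintype V] (x : V → ℝ)
    (hedge : ∀ E ∈ H, E.card = k → 0 < ∑ v ∈ E, x v)
    (hnonedge : ∀ F, F.card = k → F ∉ H → ∑ v ∈ F, x v < 0) :
    ¬ EquatableHypergraph k H := by
  rintro ⟨y, hy, ⟨G, hG, hGy⟩, hbal⟩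
  set A := (univ : Finset V).powersetCard k
  have hcard : ∀ E ∈ A, E.card = k := fun E hE => mem_powersetCard_univ.mp hE
  have hedge' : ∀ E ∈ A.filter (· ∈ H), 0 ≤ (∑ v ∈ E, x v) * y E := fun E hE => by
    rw [mem_filter] at hE
    exact mul_nonneg (hedge E hE.2 (hcard E hE.1)).le (hy E)
  have hnonedge' : ∀ F ∈ A.filter (· ∉ H), (∑ v ∈ F, x v) * y F ≤ 0 := fun F hF => by
    rw [mem_filter] at hF
    exact mul_nonpos_of_nonpos_of_nonneg (hnonedge F (hcard F hF.1) hF.2).le (hy F)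
  have hsum : ∑ E ∈ A.filter (· ∈ H), (∑ v ∈ E, x v) * y E
      = ∑ F ∈ A.filter (· ∉ H), (∑ v ∈ F, x v) * y F := by
    rw [← sum_mul_sum_filter_mem_comm, ← sum_mul_sum_filter_mem_comm]
    simp only [hbal]
  have hedge0 := (sum_eq_zero_iff_of_nonneg hedge').mp
    (le_antisymm (hsum ▸ sum_nonpos hnonedge') (sum_nonneg hedge'))
  have hnonedge0 := (sum_eq_zero_iff_of_nonpos hnonedge').mp
    (le_antisymm (sum_nonpos hnonedge') (hsum ▸ sum_nonneg hedge'))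
  by_cases hGH : G ∈ H
  · have := hedge0 G (mem_filter.mpr ⟨hG, hGH⟩)
    exact hGy ((mul_eq_zero.mp this).resolve_left (hedge G hGH (hcard G hG)).ne')
  · have := hnonedge0 G (mem_filter.mpr ⟨hG, hGH⟩)
    exact hGy ((mul_eq_zero.mp this).resolve_left (hnonedge G (hcard G hG) hGH).ne)

theorem exists_strictly_separating_of_nonedge_iff_subset (hk : 1 ≤ k) {P : Finset V}
    (hP : ∀ F : Finset V, F.card = k → (F ∉ H ↔ F ⊆ P)) :
    ∃ x : V → ℝ, (∀ E ∈ H, E.card = k → 0 < ∑ v ∈ E, x v) ∧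
      ∀ F, F.card = k → F ∉ H → ∑ v ∈ F, x v < 0 := by
  have hsum : ∀ E : Finset V, ∑ v ∈ E, ((k + 1 : ℝ) * (if v ∉ P then 1 else 0) - 1)
      = (k + 1) * (E \ P).card - E.card := by
    intro E
    rw [sum_sub_distrib, ← mul_sum, sum_boole, sum_const, nsmul_one, sdiff_eq_filter]
  refine ⟨fun v => (k + 1 : ℝ) * (if v ∉ P then 1 else 0) - 1, fun E hE hEk => ?_,
    fun F hFk hF => ?_⟩
  · rw [hsum, hEk]
    obtain ⟨w, hwE, hwP⟩ := not_subset.mp (fun h => (hP E hEk).mpr h hE)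
    have : (1 : ℝ) ≤ (E \ P).card := by exact_mod_cast card_pos.mpr ⟨w, mem_sdiff.mpr ⟨hwE, hwP⟩⟩
    nlinarith
  · rw [hsum, hFk, sdiff_eq_empty_iff_subset.mpr ((hP F hFk).mp hF)]
    have : (1 : ℝ) ≤ k := by exact_mod_cast hk
    simp only [card_empty, Nat.cast_zero, mul_zero]
    linarith

theorem card_insert_erase {E : Finset V} {a b : V} (ha : a ∈ E) (hb : b ∉ E) :
    (insert b (E.erase a)).card = E.card := by
  rw [card_insert_of_notMem (fun h => hb (mem_of_mem_erase h)), card_erase_add_one ha]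

theorem val_add_val_exchange {E₁ E₂ : Finset V} {v₁ v₂ : V} (hv₁ : v₁ ∈ E₁ ∧ v₁ ∉ E₂)
    (hv₂ : v₂ ∈ E₂ ∧ v₂ ∉ E₁) :
    (insert v₂ (E₁.erase v₁)).val + (insert v₁ (E₂.erase v₂)).val = E₁.val + E₂.val := by
  rw [insert_val_of_notMem (fun h => hv₂.2 (mem_of_mem_erase h)),
    insert_val_of_notMem (fun h => hv₁.2 (mem_of_mem_erase h)), erase_val, erase_val,
    ← Multiset.cons_erase (mem_val.mpr hv₁.1), ← Multiset.cons_erase (mem_val.mpr hv₂.1)]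
  simp only [Multiset.erase_cons_head, Multiset.cons_add, Multiset.add_cons,
    Multiset.cons_swap v₂ v₁]

theorem equatable_of_val_add_val_eq [Fintype V] {E₁ E₂ F₁ F₂ : Finset V}
    (hE₁ : E₁ ∈ H) (hE₂ : E₂ ∈ H) (hF₁ : F₁ ∉ H) (hF₂ : F₂ ∉ H)
    (hE₁k : E₁.card = k) (hE₂k : E₂.card = k) (hF₁k : F₁.card = k) (hF₂k : F₂.card = k)
    (hval : F₁.val + F₂.val = E₁.val + E₂.val) :
    EquatableHypergraph k H := by
  let y : Finset V → ℝ := fun G =>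
    (if G = E₁ then 1 else 0) + (if G = E₂ then 1 else 0) +
      (if G = F₁ then 1 else 0) + (if G = F₂ then 1 else 0)
  have hyE₁ : 0 < y E₁ := by simp only [y, ↓reduceIte]; positivity
  refine ⟨y, fun G => by positivity, ⟨E₁, mem_powersetCard_univ.mpr hE₁k, hyE₁.ne'⟩,
    fun v => ?_⟩
  have hcount := congrArg (fun s => (Multiset.count v s : ℝ)) hval
  simp only [Multiset.count_add, Multiset.count_eq_of_nodup (nodup _), mem_val, Nat.cast_add,
    Nat.cast_ite, Nat.cast_one, Nat.cast_zero] at hcount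
  simpa [y, sum_add_distrib, sum_ite_eq', hE₁, hE₂, hF₁, hF₂, hE₁k, hE₂k, hF₁k, hF₂k]
    using hcount.symm

theorem equatable_of_exchangeable [Fintype V] (hH : ∀ E ∈ H, E.card = k)
    (hex : ExchangeableHypergraph H) : EquatableHypergraph k H := by
  obtain ⟨E₁, hE₁, E₂, hE₂, v₁, hv₁, v₂, hv₂, hF₁, hF₂⟩ := hex
  rw [mem_sdiff] at hv₁ hv₂
  exact equatable_of_val_add_val_eq hE₁ hE₂ hF₁ hF₂ (hH E₁ hE₁) (hH E₂ hE₂)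
    (card_insert_erase hv₁.1 hv₂.2 ▸ hH E₁ hE₁) (card_insert_erase hv₂.1 hv₁.2 ▸ hH E₂ hE₂)
    (val_add_val_exchange hv₁ hv₂)

end Equatable

theorem paving_matroid_equatable_iff_exchangeable_general [Fintype V] [DecidableEq V]
    (k : ℕ) (H : Finset (Finset V))
    (hk : 1 ≤ k)
    (hH : ∀ E ∈ H, E.card = k)
    (hbex : ∀ E₁ ∈ H, ∀ E₂ ∈ H, ∀ v₁ ∈ E₁ \ E₂,
      ∃ v₂ ∈ E₂ \ E₁, insert v₂ (E₁.erase v₁) ∈ H)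
    (hpaving : ∀ I : Finset V, I.card = k - 1 → ∃ E ∈ H, I ⊆ E) :
    EquatableHypergraph k H ↔ ExchangeableHypergraph H := by
  refine ⟨fun heq => ?_, equatable_of_exchangeable hH⟩
  by_contra hnx
  obtain ⟨P, hP⟩ := exists_nonedge_iff_subset_of_not_exchangeable hbex
    (fun _ hI => exists_notMem_hyperplane hk hH hpaving hI) hk hnx
  obtain ⟨x, hedge, hnonedge⟩ := exists_strictly_separating_of_nonedge_iff_subset hk hP
  exact not_equatable_of_strictly_separated x hedge hnonedge heq

/-- A paving k-matroid is equatable iff it is exchangeable. -/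
theorem paving_matroid_equatable_iff_exchangeable [Fintype V] [DecidableEq V]
    (k : ℕ) (H : Finset (Finset V))
    (hk : 1 ≤ k) (hkn : k < Fintype.card V)
    (hH : ∀ E ∈ H, E.card = k) (hne : H.Nonempty)
    (hbex : ∀ E₁ ∈ H, ∀ E₂ ∈ H, ∀ v₁ ∈ E₁ \ E₂,
      ∃ v₂ ∈ E₂ \ E₁, insert v₂ (E₁.erase v₁) ∈ H)
    (hpaving : ∀ I : Finset V, I.card = k - 1 → ∃ E ∈ H, I ⊆ E) :
    EquatableHypergraph k H ↔ ExchangeableHypergraph H :=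
  paving_matroid_equatable_iff_exchangeable_general k H hk hH hbex hpaving
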